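/- arXiv:1312.2863 — 3 statements merged into one kernel-verified Lean document; each statement's English description precedes it below -/
import Mathlib

section
/- Let {X(s,t) : s,t ≥ 0} be a centered homogeneous Gaussian random field satisfying conditions (A1) and (A2), let r ≥ 0 be a constant, let a > 0, set q1 = a·u^{−2/α1}, q2 = a·u^{−2/α2}, and let T = T(u) → ∞ as u → ∞. Then there exists ε > 0 such that (m(u)/(q1·q2)) · Σ_{(j,k)∈ℤ², 0 < max(|j·q1|, |k·q2|) < ε} [ (1 − r(j·q1, k·q2))·(r/log T) · (1 − (r(j·q1, k·q2) + (1 − r(j·q1, k·q2))·r/log T)²)^{−1/2} · exp( −u²/(1 + r(j·q1, k·q2) + (1 − r(j·q1, k·q2))·r/log T) ) ] → 0 as u → ∞. -/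
open MeasureTheory ProbabilityTheory Filter Set Asymptotics Topology
open scoped ProbabilityTheory

noncomputable section

/-- The survival function `Ψ` of the standard normal distribution. -/
def stdGaussSurvival (u : ℝ) : ℝ := ((gaussianReal 0 1) (Set.Ioi u)).toReal

/-- A centered homogeneous (stationary) Gaussian random field on `ℝ²` with unit
variance, correlation function `ρ` (so that `Cov(X(p), X(q)) = ρ(p - q)`) and
a.s. continuous sample paths. -/
structure IsHomogGaussianField {Ω : Type} [MeasureSpace Ω]
    (X : ℝ × ℝ → Ω → ℝ) (ρ : ℝ × ℝ → ℝ) : Prop where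
  meas : ∀ p, Measurable (X p)
  gaussian : ∀ (n : ℕ) (c : Fin n → ℝ) (p : Fin n → ℝ × ℝ),
    ∃ v : NNReal,
      Measure.map (fun ω => ∑ i, c i * X (p i) ω) ℙ = gaussianReal 0 v
  centered : ∀ p, ∫ ω, X p ω = 0
  cov : ∀ p q, ∫ ω, X p ω * X q ω = ρ (p - q)
  corr_self : ρ 0 = 1
  ae_cont : ∀ᵐ ω ∂(ℙ : Measure Ω), Continuous fun p => X p ω

/-- Condition A1 : `ρ(s,t) = 1 - |s|^{α₁} - |t|^{α₂} + o(|s|^{α₁} + |t|^{α₂})`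
as `(s,t) → (0,0)`, with `α₁, α₂ ∈ (0,2]`. -/
def CondA1 (ρ : ℝ × ℝ → ℝ) (α₁ α₂ : ℝ) : Prop :=
  α₁ ∈ Set.Ioc (0:ℝ) 2 ∧ α₂ ∈ Set.Ioc (0:ℝ) 2 ∧
    Tendsto (fun p : ℝ × ℝ =>
        (ρ p - (1 - |p.1| ^ α₁ - |p.2| ^ α₂)) / (|p.1| ^ α₁ + |p.2| ^ α₂))
      (𝓝[≠] (0 : ℝ × ℝ)) (𝓝 0)

/-- Condition A2 : `ρ(s,t) < 1` for `(s,t) ≠ (0,0)`. -/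
def CondA2 (ρ : ℝ × ℝ → ℝ) : Prop := ∀ p : ℝ × ℝ, p ≠ 0 → ρ p < 1

/-- Condition A3 : `sup_{s²+t² = d²} |ρ(s,t)·log d - r| → 0` as `d → ∞`. -/
def CondA3 (ρ : ℝ × ℝ → ℝ) (r : ℝ) : Prop :=
  ∀ ε > 0, ∃ D : ℝ, ∀ d ≥ D, ∀ s t : ℝ,
    s ^ 2 + t ^ 2 = d ^ 2 → |ρ (s, t) * Real.log d - r| < ε

variable {Ω : Type} [MeasureSpace Ω]

/-- `P(sup_{p ∈ S} X(p) ≤ u)`. -/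
def pBelow (X : ℝ × ℝ → Ω → ℝ) (S : Set (ℝ × ℝ)) (u : ℝ) : ℝ :=
  (ℙ {ω | ∀ p ∈ S, X p ω ≤ u}).toReal

/-- `P(sup_{p ∈ S} X(p) > u)`. -/
def pExceed (X : ℝ × ℝ → Ω → ℝ) (S : Set (ℝ × ℝ)) (u : ℝ) : ℝ :=
  (ℙ {ω | ∃ p ∈ S, u < X p ω}).toReal

/-- The unit square `[0,1]²`. -/
def unitSq : Set (ℝ × ℝ) := Set.Icc 0 1 ×ˢ Set.Icc 0 1

/-- The scaling functions `m₁, m₂` : positive, tending to `∞`, with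
`m₁(u)·m₂(u)·P(sup_{[0,1]²} X > u) → 1` and `log mᵢ(u) = u²/4 + o(u²)`. -/
def GoodScaling (X : ℝ × ℝ → Ω → ℝ) (m₁ m₂ : ℝ → ℝ) : Prop :=
  (∀ u, 0 < m₁ u) ∧ (∀ u, 0 < m₂ u) ∧
    Tendsto m₁ atTop atTop ∧ Tendsto m₂ atTop atTop ∧
    Tendsto (fun u => m₁ u * m₂ u * pExceed X unitSq u) atTop (𝓝 1) ∧
    (fun u => Real.log (m₁ u) - u ^ 2 / 4) =o[atTop] (fun u : ℝ => u ^ 2) ∧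
    (fun u => Real.log (m₂ u) - u ^ 2 / 4) =o[atTop] (fun u : ℝ => u ^ 2)

/-- The closed Euclidean ball `B(0,x)` in `ℝ²`. -/
def euclBall (x : ℝ) : Set (ℝ × ℝ) := {p | Real.sqrt (p.1 ^ 2 + p.2 ^ 2) ≤ x}

/-! Near the origin (A1) makes `1 - r(s,t)` at least `(|s|^{α₁} + |t|^{α₂}) / 2` and keeps
`r(s,t) ≥ 0`; at the grid point `(j q₁, k q₂)` this quantity equals
`(a^{α₁}|j|^{α₁} + a^{α₂}|k|^{α₂}) / u²`. With `δ = r / log T` and `x = 1 - r(j q₁, k q₂)`,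
the factor `(1 - (r + xδ)²)^{-1/2}` is at most `√(2/x)`, and the exponent exceeds
`u²/2 + u²x/8`; since `√y e^{-y/8} ≤ 2 e^{-y/16}`, each summand is at most
`4 δ u⁻¹ e^{-u²/2} e^{-(a^{α₁}|j|^{α₁} + a^{α₂}|k|^{α₂})/32}`, and these weights are summable
over `ℤ²`. As `m(u)/(q₁q₂) = m(u) u^{2/α₁+2/α₂} / a²` and `u⁻¹ e^{-u²/2} = O(Ψ(u))`, the whole
expression is `O(δ · m(u) u^{2/α₁+2/α₂} Ψ(u)) = O(1 / log T(u)) → 0`. -/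

open Real

-- The summand of the theorem, with `ρ₀ = r(j q₁, k q₂)` and `δ = r / log T(u)`.
def crossTerm (ρ₀ δ u : ℝ) : ℝ :=
  (1 - ρ₀) * δ * (1 - (ρ₀ + (1 - ρ₀) * δ) ^ 2) ^ (-(1:ℝ) / 2) *
    exp (-(u ^ 2) / (1 + ρ₀ + (1 - ρ₀) * δ))

lemma crossTerm_nonneg {ρ₀ δ : ℝ} (hρ₀ : 0 ≤ ρ₀) (hρ₁ : ρ₀ ≤ 1) (hδ₀ : 0 ≤ δ) (hδ₁ : δ ≤ 1)
    (u : ℝ) : 0 ≤ crossTerm ρ₀ δ u := by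
  have hθ₀ : 0 ≤ ρ₀ + (1 - ρ₀) * δ := by positivity
  have hθ₁ : ρ₀ + (1 - ρ₀) * δ ≤ 1 := by nlinarith
  have : 0 ≤ (1 - (ρ₀ + (1 - ρ₀) * δ) ^ 2) ^ (-(1:ℝ) / 2) := rpow_nonneg (by nlinarith) _
  unfold crossTerm
  have : 0 ≤ 1 - ρ₀ := by linarith
  positivity

lemma sqrt_le_two_mul_exp {y : ℝ} (hy : 0 ≤ y) : √y ≤ 2 * exp (y / 16) := by
  have h : √y ≤ 2 * (y / 16 + 1) := by
    rw [sqrt_le_left (by positivity)]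
    nlinarith [sq_nonneg (y / 8 - 2)]
  linarith [add_one_le_exp (y / 16)]

lemma crossTerm_le {ρ₀ δ u : ℝ} (hρ₀ : 0 ≤ ρ₀) (hρ₁ : ρ₀ < 1) (hδ₀ : 0 ≤ δ) (hδ₁ : δ ≤ 1 / 2)
    (hu : 0 < u) :
    crossTerm ρ₀ δ u ≤ 4 * δ * u⁻¹ * exp (-(u ^ 2) / 2) * exp (-(u ^ 2 * (1 - ρ₀)) / 16) := by
  set x := 1 - ρ₀ with hx
  set θ := ρ₀ + x * δ with hθ
  have hx₀ : 0 < x := by linarith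
  have hθ₀ : ρ₀ ≤ θ := by nlinarith
  have hθ₁ : 1 - θ = x * (1 - δ) := by ring
  have hgap : x / 2 ≤ 1 - θ := by rw [hθ₁]; nlinarith
  have hdisc : x / 2 ≤ 1 - θ ^ 2 := by nlinarith
  have hroot : x * (1 - θ ^ 2) ^ (-(1:ℝ) / 2) ≤ 2 * √x := by
    rw [show (-(1:ℝ) / 2) = -(1 / 2) by ring, rpow_neg (by linarith), ← sqrt_eq_rpow,
      ← div_eq_mul_inv, div_le_iff₀ (sqrt_pos.mpr (by linarith))]
    calc x = 2 * √x * √(x / 4) := by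
          rw [sqrt_div' _ (by norm_num : (0:ℝ) ≤ 4), show (4:ℝ) = 2 ^ 2 by norm_num,
            sqrt_sq (by norm_num)]
          field_simp
          rw [sq_sqrt hx₀.le]
      _ ≤ 2 * √x * √(1 - θ ^ 2) := by gcongr; linarith
  have hexp : exp (-(u ^ 2) / (1 + θ)) ≤ exp (-(u ^ 2) / 2) * exp (-(u ^ 2 * x) / 8) := by
    rw [← exp_add, exp_le_exp, div_add_div _ _ (by norm_num) (by norm_num),
      div_le_div_iff₀ (by linarith) (by norm_num)]
    have : 1 / 2 + x / 8 ≤ 1 / (1 + θ) := by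
      rw [le_div_iff₀ (by linarith)]; nlinarith [mul_nonneg hx₀.le (show 0 ≤ 1 - θ by linarith)]
    rw [le_div_iff₀ (by linarith)] at this
    nlinarith [sq_nonneg u]
  have hsqrt : √x * exp (-(u ^ 2 * x) / 8) ≤ 2 * u⁻¹ * exp (-(u ^ 2 * x) / 16) := by
    have h := sqrt_le_two_mul_exp (y := u ^ 2 * x) (by positivity)
    rw [sqrt_mul (sq_nonneg u), sqrt_sq hu.le] at h
    have h8 : exp (-(u ^ 2 * x) / 8) = exp (-(u ^ 2 * x) / 16) * exp (-(u ^ 2 * x) / 16) := by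
      rw [← exp_add]; ring_nf
    have h16 : exp (u ^ 2 * x / 16) * exp (-(u ^ 2 * x) / 16) = 1 := by
      rw [← exp_add]; ring_nf; exact exp_zero
    calc √x * exp (-(u ^ 2 * x) / 8)
        = u⁻¹ * (u * √x) * exp (-(u ^ 2 * x) / 16) * exp (-(u ^ 2 * x) / 16) := by
          rw [h8]; field_simp
      _ ≤ u⁻¹ * (2 * exp (u ^ 2 * x / 16)) * exp (-(u ^ 2 * x) / 16)
            * exp (-(u ^ 2 * x) / 16) := by gcongr
      _ = 2 * u⁻¹ * exp (-(u ^ 2 * x) / 16) := by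
          linear_combination (2 * u⁻¹ * exp (-(u ^ 2 * x) / 16)) * h16
  calc crossTerm ρ₀ δ u = δ * (x * (1 - θ ^ 2) ^ (-(1:ℝ) / 2)) * exp (-(u ^ 2) / (1 + θ)) := by
        rw [crossTerm, hθ, hx]; ring_nf
    _ ≤ δ * (2 * √x) * (exp (-(u ^ 2) / 2) * exp (-(u ^ 2 * x) / 8)) := by gcongr
    _ = 2 * δ * exp (-(u ^ 2) / 2) * (√x * exp (-(u ^ 2 * x) / 8)) := by ring
    _ ≤ 2 * δ * exp (-(u ^ 2) / 2) * (2 * u⁻¹ * exp (-(u ^ 2 * x) / 16)) := by gcongr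
    _ = _ := by ring

lemma inv_mul_exp_le_stdGaussSurvival {u : ℝ} (hu : 1 ≤ u) :
    u⁻¹ * exp (-(u ^ 2) / 2) ≤ √(2 * π) * exp (3 / 2) * stdGaussSurvival u := by
  have hu₀ : 0 < u := by linarith
  have hΨ : stdGaussSurvival u = ∫ x in Ioi u, gaussianPDFReal 0 1 x := by
    rw [stdGaussSurvival, gaussianReal_apply_eq_integral 0 one_ne_zero, ENNReal.toReal_ofReal]
    exact setIntegral_nonneg measurableSet_Ioi fun x _ => gaussianPDFReal_nonneg _ _ _
  -- on `(u, u + 1/u]` the density is at least `e^{-3/2} φ(u)`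
  have hlow : ∀ x ∈ Ioc u (u + u⁻¹),
      (√(2 * π))⁻¹ * exp (-(u ^ 2) / 2 - 3 / 2) ≤ gaussianPDFReal 0 1 x := by
    rintro x ⟨hx₁, hx₂⟩
    have hinv : u * u⁻¹ = 1 := mul_inv_cancel₀ hu₀.ne'
    have hinv₁ : u⁻¹ ≤ 1 := inv_le_one_of_one_le₀ hu
    simp only [gaussianPDFReal, NNReal.coe_one, mul_one, sub_zero]
    gcongr
    nlinarith [inv_pos.mpr hu₀]
  have hslab := setIntegral_ge_of_const_le_real measurableSet_Ioc measure_Ioc_lt_top.ne hlow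
    (integrable_gaussianPDFReal 0 1).integrableOn
  rw [Real.volume_real_Ioc_of_le (by simp [hu₀.le]), add_sub_cancel_left] at hslab
  have hmono : ∫ x in Ioc u (u + u⁻¹), gaussianPDFReal 0 1 x ≤
      ∫ x in Ioi u, gaussianPDFReal 0 1 x :=
    setIntegral_mono_set (integrable_gaussianPDFReal 0 1).integrableOn
      (.of_forall fun x => gaussianPDFReal_nonneg _ _ _) Ioc_subset_Ioi_self.eventuallyLE
  calc u⁻¹ * exp (-(u ^ 2) / 2)
      = √(2 * π) * exp (3 / 2) * ((√(2 * π))⁻¹ * exp (-(u ^ 2) / 2 - 3 / 2) * u⁻¹) := by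
        rw [exp_sub]; field_simp
    _ ≤ √(2 * π) * exp (3 / 2) * stdGaussSurvival u := by
        rw [hΨ]; gcongr; linarith

lemma isLittleO_exp_neg_mul_rpow {b α : ℝ} (hb : 0 < b) (hα : 0 < α) :
    (fun x : ℝ => exp (-(b * x ^ α))) =o[atTop] fun x => x ^ (-2 : ℝ) := by
  have h := (isLittleO_exp_neg_mul_rpow_atTop hb (-2 / α)).comp_tendsto (tendsto_rpow_atTop hα)
  refine (h.congr_left fun x => by simp [Function.comp, neg_mul]).congr' .rfl ?_
  filter_upwards [eventually_ge_atTop 0] with x hx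
  rw [Function.comp, ← rpow_mul hx, mul_div_cancel₀ _ hα.ne']

lemma summable_exp_neg_mul_abs_rpow {b α : ℝ} (hb : 0 < b) (hα : 0 < α) :
    Summable fun n : ℤ => exp (-(b * |(n : ℝ)| ^ α)) := by
  have hnat : Summable fun n : ℕ => exp (-(b * (n : ℝ) ^ α)) :=
    summable_of_isBigO_nat (summable_nat_rpow.mpr (by norm_num))
      ((isLittleO_exp_neg_mul_rpow hb hα).isBigO.comp_tendsto tendsto_natCast_atTop_atTop)
  exact .of_nat_of_neg (by simpa using hnat) (by simpa using hnat)

lemma summable_exp_neg_add_abs_rpow {b₁ b₂ α₁ α₂ : ℝ} (hb₁ : 0 < b₁) (hb₂ : 0 < b₂)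
    (hα₁ : 0 < α₁) (hα₂ : 0 < α₂) :
    Summable fun jk : ℤ × ℤ =>
      exp (-(b₁ * |(jk.1 : ℝ)| ^ α₁ + b₂ * |(jk.2 : ℝ)| ^ α₂)) := by
  refine ((summable_exp_neg_mul_abs_rpow hb₁ hα₁).mul_of_nonneg
    (summable_exp_neg_mul_abs_rpow hb₂ hα₂) (fun _ => (exp_pos _).le)
    (fun _ => (exp_pos _).le)).congr fun jk => ?_
  rw [← exp_add, neg_add]

lemma abs_rpow_add_abs_rpow_pos {s t : ℝ} (α₁ α₂ : ℝ)
    (h : 0 < max |s| |t|) : 0 < |s| ^ α₁ + |t| ^ α₂ := by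
  rcases lt_max_iff.mp h with h | h
  · exact add_pos_of_pos_of_nonneg (rpow_pos_of_pos h _) (rpow_nonneg (abs_nonneg t) _)
  · exact add_pos_of_nonneg_of_pos (rpow_nonneg (abs_nonneg s) _) (rpow_pos_of_pos h _)

def LocalCorrBound (ρ : ℝ × ℝ → ℝ) (α₁ α₂ ε : ℝ) : Prop :=
  ∀ s t : ℝ, 0 < max |s| |t| → max |s| |t| < ε →
    0 ≤ ρ (s, t) ∧ (|s| ^ α₁ + |t| ^ α₂) / 2 ≤ 1 - ρ (s, t)

lemma CondA1.exists_localCorrBound {ρ : ℝ × ℝ → ℝ} {α₁ α₂ : ℝ} (hA1 : CondA1 ρ α₁ α₂) :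
    ∃ ε > 0, LocalCorrBound ρ α₁ α₂ ε := by
  obtain ⟨⟨hα₁, -⟩, ⟨hα₂, -⟩, hlim⟩ := hA1
  have hS : Tendsto (fun p : ℝ × ℝ => |p.1| ^ α₁ + |p.2| ^ α₂) (𝓝 0) (𝓝 0) := by
    have hcont : Continuous fun p : ℝ × ℝ => |p.1| ^ α₁ + |p.2| ^ α₂ :=
      (continuous_fst.abs.rpow_const fun _ => Or.inr hα₁.le).add
        (continuous_snd.abs.rpow_const fun _ => Or.inr hα₂.le)
    simpa [zero_rpow hα₁.ne', zero_rpow hα₂.ne'] using hcont.tendsto 0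
  have hev := (hlim.eventually (Ioo_mem_nhds (by norm_num : (-1/2 : ℝ) < 0)
    (by norm_num : (0 : ℝ) < 1/2))).and
    (hS.mono_left nhdsWithin_le_nhds |>.eventually (gt_mem_nhds (by norm_num : (0:ℝ) < 2/3)))
  obtain ⟨ε, hε, hball⟩ := Metric.eventually_nhds_iff.mp (eventually_nhdsWithin_iff.mp hev)
  refine ⟨ε, hε, fun s t hpos hlt => ?_⟩
  have hS₀ := abs_rpow_add_abs_rpow_pos α₁ α₂ hpos
  have hdist : dist (s, t) 0 = max |s| |t| := by simp
  have hne : (s, t) ≠ 0 := by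
    rintro ⟨⟩
    simp at hpos
  obtain ⟨⟨hlo, hhi⟩, hsmall⟩ := hball (hdist ▸ hlt) hne
  dsimp only at hlo hhi hsmall
  rw [lt_div_iff₀ hS₀] at hlo
  rw [div_lt_iff₀ hS₀] at hhi
  constructor <;> linarith

def gridTerm (ρ : ℝ × ℝ → ℝ) (q₁ q₂ ε δ u : ℝ) (jk : ℤ × ℤ) : ℝ :=
  if 0 < max |(jk.1 : ℝ) * q₁| |(jk.2 : ℝ) * q₂| ∧ max |(jk.1 : ℝ) * q₁| |(jk.2 : ℝ) * q₂| < ε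
  then crossTerm (ρ ((jk.1 : ℝ) * q₁, (jk.2 : ℝ) * q₂)) δ u else 0

section gridTerm

variable {ρ : ℝ × ℝ → ℝ} {α₁ α₂ ε q₁ q₂ δ u : ℝ}

lemma gridTerm_nonneg (hloc : LocalCorrBound ρ α₁ α₂ ε) (hδ₀ : 0 ≤ δ) (hδ₁ : δ ≤ 1 / 2)
    (jk : ℤ × ℤ) : 0 ≤ gridTerm ρ q₁ q₂ ε δ u jk := by
  unfold gridTerm
  split_ifs with h
  · obtain ⟨hρ₀, hgap⟩ := hloc _ _ h.1 h.2
    have : 0 ≤ |(jk.1 : ℝ) * q₁| ^ α₁ + |(jk.2 : ℝ) * q₂| ^ α₂ := by positivity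
    exact crossTerm_nonneg hρ₀ (by linarith) hδ₀ (by linarith) u
  · exact le_rfl

lemma gridTerm_le (hq₁ : 0 < q₁) (hq₂ : 0 < q₂) (hloc : LocalCorrBound ρ α₁ α₂ ε)
    (hδ₀ : 0 ≤ δ) (hδ₁ : δ ≤ 1 / 2) (hu : 0 < u) (jk : ℤ × ℤ) :
    gridTerm ρ q₁ q₂ ε δ u jk ≤
      4 * δ * u⁻¹ * exp (-(u ^ 2) / 2) * exp (-(u ^ 2 * q₁ ^ α₁ / 32 * |(jk.1 : ℝ)| ^ α₁ +
        u ^ 2 * q₂ ^ α₂ / 32 * |(jk.2 : ℝ)| ^ α₂)) := by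
  unfold gridTerm
  split_ifs with h
  · obtain ⟨hρ₀, hgap⟩ := hloc _ _ h.1 h.2
    have hS₀ := abs_rpow_add_abs_rpow_pos α₁ α₂ h.1
    refine (crossTerm_le hρ₀ (by linarith) hδ₀ hδ₁ hu).trans ?_
    gcongr
    rw [abs_mul, abs_mul, abs_of_pos hq₁, abs_of_pos hq₂,
      mul_rpow (abs_nonneg _) hq₁.le, mul_rpow (abs_nonneg _) hq₂.le] at hgap
    nlinarith [sq_nonneg u]
  · positivity

def gridSum (ρ : ℝ × ℝ → ℝ) (q₁ q₂ ε δ u : ℝ) : ℝ :=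
  ∑' jk : ℤ × ℤ, gridTerm ρ q₁ q₂ ε δ u jk

lemma gridSum_nonneg (hloc : LocalCorrBound ρ α₁ α₂ ε) (hδ₀ : 0 ≤ δ) (hδ₁ : δ ≤ 1 / 2) :
    0 ≤ gridSum ρ q₁ q₂ ε δ u :=
  tsum_nonneg (gridTerm_nonneg hloc hδ₀ hδ₁)

lemma gridSum_le (hα₁ : 0 < α₁) (hα₂ : 0 < α₂) (hq₁ : 0 < q₁) (hq₂ : 0 < q₂)
    (hloc : LocalCorrBound ρ α₁ α₂ ε) (hδ₀ : 0 ≤ δ) (hδ₁ : δ ≤ 1 / 2) (hu : 0 < u) :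
    gridSum ρ q₁ q₂ ε δ u ≤ 4 * δ * u⁻¹ * exp (-(u ^ 2) / 2) *
      ∑' jk : ℤ × ℤ, exp (-(u ^ 2 * q₁ ^ α₁ / 32 * |(jk.1 : ℝ)| ^ α₁ +
        u ^ 2 * q₂ ^ α₂ / 32 * |(jk.2 : ℝ)| ^ α₂)) := by
  have hsum := (summable_exp_neg_add_abs_rpow (b₁ := u ^ 2 * q₁ ^ α₁ / 32)
    (b₂ := u ^ 2 * q₂ ^ α₂ / 32) (by positivity) (by positivity) hα₁ hα₂).mul_left
    (4 * δ * u⁻¹ * exp (-(u ^ 2) / 2))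
  have hle := gridTerm_le (ρ := ρ) (ε := ε) hq₁ hq₂ hloc hδ₀ hδ₁ hu
  rw [gridSum, ← tsum_mul_left]
  exact (hsum.of_nonneg_of_le (gridTerm_nonneg hloc hδ₀ hδ₁) hle).tsum_le_tsum hle hsum

end gridTerm

lemma sq_mul_mul_rpow_neg_two_div {a u α : ℝ} (ha : 0 ≤ a) (hu : 0 < u) (hα : α ≠ 0) :
    u ^ 2 * (a * u ^ (-2 / α)) ^ α = a ^ α := by
  rw [mul_rpow ha (rpow_nonneg hu.le _), ← rpow_mul hu.le, div_mul_cancel₀ _ hα,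
    rpow_neg hu.le, rpow_two]
  field_simp

lemma div_mul_rpow_neg_two_div {a u α₁ α₂ m : ℝ} (hu : 0 < u) :
    m / (a * u ^ (-2 / α₁) * (a * u ^ (-2 / α₂))) = m * u ^ (2 / α₁ + 2 / α₂) / a ^ 2 := by
  rw [rpow_add hu, neg_div, neg_div, rpow_neg hu.le, rpow_neg hu.le]
  field_simp

lemma mul_gridSum_le {ρ : ℝ × ℝ → ℝ} {α₁ α₂ ε a m δ u : ℝ} (hα₁ : 0 < α₁) (hα₂ : 0 < α₂)
    (ha : 0 < a) (hloc : LocalCorrBound ρ α₁ α₂ ε) (hm : 0 ≤ m) (hδ₀ : 0 ≤ δ)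
    (hδ₁ : δ ≤ 1 / 2) (hu : 1 ≤ u) :
    m / (a * u ^ (-2 / α₁) * (a * u ^ (-2 / α₂))) *
        gridSum ρ (a * u ^ (-2 / α₁)) (a * u ^ (-2 / α₂)) ε δ u ≤
      4 * √(2 * π) * exp (3 / 2) / a ^ 2 *
        (∑' jk : ℤ × ℤ, exp (-(a ^ α₁ / 32 * |(jk.1 : ℝ)| ^ α₁ +
          a ^ α₂ / 32 * |(jk.2 : ℝ)| ^ α₂))) *
        δ * (m * u ^ (2 / α₁ + 2 / α₂) * stdGaussSurvival u) := by
  have hu₀ : 0 < u := by linarith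
  have hgrid := gridSum_le (q₁ := a * u ^ (-2 / α₁)) (q₂ := a * u ^ (-2 / α₂)) hα₁ hα₂
    (by positivity) (by positivity) hloc hδ₀ hδ₁ hu₀
  rw [sq_mul_mul_rpow_neg_two_div ha.le hu₀ hα₁.ne',
    sq_mul_mul_rpow_neg_two_div ha.le hu₀ hα₂.ne'] at hgrid
  set C := ∑' jk : ℤ × ℤ, exp (-(a ^ α₁ / 32 * |(jk.1 : ℝ)| ^ α₁ +
    a ^ α₂ / 32 * |(jk.2 : ℝ)| ^ α₂))
  have hC : 0 ≤ C := tsum_nonneg fun _ => (exp_pos _).le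
  have htail := inv_mul_exp_le_stdGaussSurvival hu
  rw [div_mul_rpow_neg_two_div hu₀]
  calc m * u ^ (2 / α₁ + 2 / α₂) / a ^ 2 * gridSum ρ (a * u ^ (-2 / α₁)) (a * u ^ (-2 / α₂)) ε δ u
      ≤ m * u ^ (2 / α₁ + 2 / α₂) / a ^ 2 * (4 * δ * u⁻¹ * exp (-(u ^ 2) / 2) * C) := by
        gcongr
    _ = 4 * C / a ^ 2 * δ * (m * u ^ (2 / α₁ + 2 / α₂)) * (u⁻¹ * exp (-(u ^ 2) / 2)) := by
        ring
    _ ≤ 4 * C / a ^ 2 * δ * (m * u ^ (2 / α₁ + 2 / α₂)) *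
          (√(2 * π) * exp (3 / 2) * stdGaussSurvival u) := by
        gcongr
    _ = _ := by ring

theorem statement11_general (ρ : ℝ × ℝ → ℝ) (α₁ α₂ r : ℝ) (hr : 0 ≤ r)
    (hA1 : CondA1 ρ α₁ α₂)
    (m : ℝ → ℝ) (hmpos : ∀ u, 0 < m u)
    (c : ℝ)
    (hmΨ : Tendsto (fun u => m u * u ^ (2 / α₁ + 2 / α₂) * stdGaussSurvival u)
      atTop (𝓝 c))
    (a : ℝ) (ha : 0 < a)
    (T : ℝ → ℝ) (hT : Tendsto T atTop atTop) :
    ∃ ε > (0:ℝ),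
      Tendsto (fun u =>
        (m u / ((a * u ^ (-2 / α₁)) * (a * u ^ (-2 / α₂)))) *
        ∑' jk : ℤ × ℤ,
          (if 0 < max |(jk.1 : ℝ) * (a * u ^ (-2 / α₁))|
                    |(jk.2 : ℝ) * (a * u ^ (-2 / α₂))| ∧
              max |(jk.1 : ℝ) * (a * u ^ (-2 / α₁))|
                  |(jk.2 : ℝ) * (a * u ^ (-2 / α₂))| < ε
          then
            (1 - ρ ((jk.1 : ℝ) * (a * u ^ (-2 / α₁)),
                    (jk.2 : ℝ) * (a * u ^ (-2 / α₂)))) * (r / Real.log (T u)) *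
            (1 - (ρ ((jk.1 : ℝ) * (a * u ^ (-2 / α₁)),
                     (jk.2 : ℝ) * (a * u ^ (-2 / α₂))) +
                  (1 - ρ ((jk.1 : ℝ) * (a * u ^ (-2 / α₁)),
                          (jk.2 : ℝ) * (a * u ^ (-2 / α₂)))) *
                    (r / Real.log (T u))) ^ 2) ^ (-(1:ℝ) / 2) *
            Real.exp (-(u ^ 2) /
              (1 + ρ ((jk.1 : ℝ) * (a * u ^ (-2 / α₁)),
                      (jk.2 : ℝ) * (a * u ^ (-2 / α₂))) +
                (1 - ρ ((jk.1 : ℝ) * (a * u ^ (-2 / α₁)),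
                        (jk.2 : ℝ) * (a * u ^ (-2 / α₂)))) * (r / Real.log (T u))))
          else 0))
        atTop (𝓝 0) := by
  obtain ⟨ε, hε, hloc⟩ := hA1.exists_localCorrBound
  obtain ⟨⟨hα₁, -⟩, ⟨hα₂, -⟩, -⟩ := hA1
  refine ⟨ε, hε, ?_⟩
  change Tendsto (fun u => m u / _ *
    gridSum ρ (a * u ^ (-2 / α₁)) (a * u ^ (-2 / α₂)) ε (r / log (T u)) u) atTop (𝓝 0)
  have hlogT := tendsto_log_atTop.comp hT
  have hδ : Tendsto (fun u => r / log (T u)) atTop (𝓝 0) :=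
    tendsto_const_nhds.div_atTop hlogT
  have hδ₀ : ∀ᶠ u in atTop, 0 ≤ r / log (T u) :=
    (hlogT.eventually_ge_atTop 0).mono fun u hu => div_nonneg hr hu
  have hδ₁ : ∀ᶠ u in atTop, r / log (T u) ≤ 1 / 2 :=
    hδ.eventually (eventually_le_nhds (by norm_num))
  set K := 4 * √(2 * π) * exp (3 / 2) / a ^ 2 * ∑' jk : ℤ × ℤ,
    exp (-(a ^ α₁ / 32 * |(jk.1 : ℝ)| ^ α₁ + a ^ α₂ / 32 * |(jk.2 : ℝ)| ^ α₂))
  refine squeeze_zero' (g := fun u =>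
    K * (r / log (T u)) * (m u * u ^ (2 / α₁ + 2 / α₂) * stdGaussSurvival u))
    ?nonneg ?bound ?limit
  case nonneg =>
    filter_upwards [hδ₀, hδ₁, eventually_gt_atTop 0] with u h₀ h₁ hu
    exact mul_nonneg (div_nonneg (hmpos u).le (by positivity)) (gridSum_nonneg hloc h₀ h₁)
  case bound =>
    filter_upwards [hδ₀, hδ₁, eventually_ge_atTop 1] with u h₀ h₁ hu
    exact mul_gridSum_le hα₁ hα₂ ha hloc (hmpos u).le h₀ h₁ hu
  case limit => simpa using (hδ.const_mul _).mul hmΨ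

/-- Lemma 3: with `q₁ = a·u^{-2/α₁}`, `q₂ = a·u^{-2/α₂}` and `T(u) → ∞`, there
exists `ε > 0` such that the normalized sum over grid points with
`0 < max(|j·q₁|, |k·q₂|) < ε` of
`(1 - r(j·q₁,k·q₂))·(r/log T)·(1 - (r(j·q₁,k·q₂) + (1 - r(j·q₁,k·q₂))·r/log T)²)^{-1/2}
  ·exp(-u²/(1 + r(j·q₁,k·q₂) + (1 - r(j·q₁,k·q₂))·r/log T))` tends to `0`. -/
theorem statement11 {Ω : Type} [MeasureSpace Ω] [IsProbabilityMeasure (ℙ : Measure Ω)]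
    (X : ℝ × ℝ → Ω → ℝ) (ρ : ℝ × ℝ → ℝ) (α₁ α₂ r : ℝ) (hr : 0 ≤ r)
    (hX : IsHomogGaussianField X ρ) (hA1 : CondA1 ρ α₁ α₂) (hA2 : CondA2 ρ)
    (m : ℝ → ℝ) (hmpos : ∀ u, 0 < m u)
    (c : ℝ) (hc : 0 < c)
    (hmΨ : Tendsto (fun u => m u * u ^ (2 / α₁ + 2 / α₂) * stdGaussSurvival u)
      atTop (𝓝 c))
    (a : ℝ) (ha : 0 < a)
    (T : ℝ → ℝ) (hT : Tendsto T atTop atTop) :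
    ∃ ε > (0:ℝ),
      Tendsto (fun u =>
        (m u / ((a * u ^ (-2 / α₁)) * (a * u ^ (-2 / α₂)))) *
        ∑' jk : ℤ × ℤ,
          (if 0 < max |(jk.1 : ℝ) * (a * u ^ (-2 / α₁))|
                    |(jk.2 : ℝ) * (a * u ^ (-2 / α₂))| ∧
              max |(jk.1 : ℝ) * (a * u ^ (-2 / α₁))|
                  |(jk.2 : ℝ) * (a * u ^ (-2 / α₂))| < ε
          then
            (1 - ρ ((jk.1 : ℝ) * (a * u ^ (-2 / α₁)),
                    (jk.2 : ℝ) * (a * u ^ (-2 / α₂)))) * (r / Real.log (T u)) *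
            (1 - (ρ ((jk.1 : ℝ) * (a * u ^ (-2 / α₁)),
                     (jk.2 : ℝ) * (a * u ^ (-2 / α₂))) +
                  (1 - ρ ((jk.1 : ℝ) * (a * u ^ (-2 / α₁)),
                          (jk.2 : ℝ) * (a * u ^ (-2 / α₂)))) *
                    (r / Real.log (T u))) ^ 2) ^ (-(1:ℝ) / 2) *
            Real.exp (-(u ^ 2) /
              (1 + ρ ((jk.1 : ℝ) * (a * u ^ (-2 / α₁)),
                      (jk.2 : ℝ) * (a * u ^ (-2 / α₂))) +
                (1 - ρ ((jk.1 : ℝ) * (a * u ^ (-2 / α₁)),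
                        (jk.2 : ℝ) * (a * u ^ (-2 / α₂)))) * (r / Real.log (T u))))
          else 0))
        atTop (𝓝 0) :=
  statement11_general ρ α₁ α₂ r hr hA1 m hmpos c hmΨ a ha T hT
end
end

section
/- Let α1, α2 ∈ (0,2], τ > 0 and c > 0 be constants, and let T1(u), T2(u) be positive functions with T1(u) → ∞, T2(u) → ∞ and c·T1(u)·T2(u)·u^{2/α1 + 2/α2}·Ψ(u) → τ² as u → ∞. Then: (a) u² / (2·log(T1(u)·T2(u))) → 1; (b) log u = (1/2)·log 2 + (1/2)·log log(T1(u)·T2(u)) + o(1); and (c) u² = 2·log(T1(u)·T2(u)) + (2/α1 + 2/α2 − 1)·log log(T1(u)·T2(u)) − 4·log τ + 2·log( c·2^{1/α1 + 1/α2}/(2√π) ) + o(1), as u → ∞. -/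
/-!
Comparing `e^{-x²/2}` on `(u, ∞)` with the derivatives of `-e^{-x²/2}/u` and
`-x e^{-x²/2}/(1 + x²)` gives Mills' bounds `u/(1 + u²) ≤ √(2π) e^{u²/2} Ψ(u) ≤ 1/u`, hence
`log Ψ(u) = -u²/2 - log u - log √(2π) + o(1)`. Taking logarithms in the hypothesis then gives
`u²/2 - log (T₁T₂) - (a - 1) log u → K` with `a = 2/α₁ + 2/α₂` and an explicit constant `K`.
Since `log u = o(u²)`, this forces `u² ~ 2 log (T₁T₂)`, which is (a); its logarithm is (b), and
substituting (b) back into the relation gives (c).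
-/

open MeasureTheory ProbabilityTheory Filter Set Topology

noncomputable section

open Real

lemma integral_Ioi_le_of_le_deriv {f g g' : ℝ → ℝ} {a l : ℝ} (hf : IntegrableOn f (Ioi a))
    (hderiv : ∀ x ∈ Ici a, HasDerivAt g (g' x) x) (hg'_nonneg : ∀ x ∈ Ioi a, 0 ≤ g' x)
    (hg : Tendsto g atTop (𝓝 l)) (hle : ∀ x ∈ Ioi a, f x ≤ g' x) :
    ∫ x in Ioi a, f x ≤ l - g a := by
  rw [← integral_Ioi_of_hasDerivAt_of_nonneg' hderiv hg'_nonneg hg]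
  exact setIntegral_mono_on hf (integrableOn_Ioi_deriv_of_nonneg' hderiv hg'_nonneg hg)
    measurableSet_Ioi hle

lemma le_integral_Ioi_of_deriv_le {f g g' : ℝ → ℝ} {a l : ℝ} (hf : IntegrableOn f (Ioi a))
    (hderiv : ∀ x ∈ Ici a, HasDerivAt g (g' x) x) (hg'_nonneg : ∀ x ∈ Ioi a, 0 ≤ g' x)
    (hg : Tendsto g atTop (𝓝 l)) (hle : ∀ x ∈ Ioi a, g' x ≤ f x) :
    l - g a ≤ ∫ x in Ioi a, f x := by
  rw [← integral_Ioi_of_hasDerivAt_of_nonneg' hderiv hg'_nonneg hg]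
  exact setIntegral_mono_on (integrableOn_Ioi_deriv_of_nonneg' hderiv hg'_nonneg hg) hf
    measurableSet_Ioi hle

lemma integrableOn_exp_neg_sq_div_two (s : Set ℝ) :
    IntegrableOn (fun x : ℝ => rexp (-(x ^ 2 / 2))) s := by
  simpa [neg_div, div_eq_inv_mul] using
    (integrable_exp_neg_mul_sq (by norm_num : (0 : ℝ) < 1 / 2)).integrableOn (s := s)

lemma tendsto_exp_neg_sq_div_two_atTop :
    Tendsto (fun x : ℝ => rexp (-(x ^ 2 / 2))) atTop (𝓝 0) :=
  tendsto_exp_atBot.comp <| tendsto_neg_atTop_atBot.comp <|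
    (tendsto_pow_atTop two_ne_zero).atTop_div_const two_pos

lemma hasDerivAt_exp_neg_sq_div_two (x : ℝ) :
    HasDerivAt (fun y : ℝ => rexp (-(y ^ 2 / 2))) (-x * rexp (-(x ^ 2 / 2))) x := by
  convert ((hasDerivAt_pow 2 x).div_const 2).fun_neg.exp using 1
  push_cast; ring

lemma integral_Ioi_exp_neg_sq_div_two_le {u : ℝ} (hu : 0 < u) :
    ∫ x in Ioi u, rexp (-(x ^ 2 / 2)) ≤ u⁻¹ * rexp (-(u ^ 2 / 2)) := by
  have h := integral_Ioi_le_of_le_deriv (integrableOn_exp_neg_sq_div_two _)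
    (g := fun y => -(u⁻¹ * rexp (-(y ^ 2 / 2))))
    (fun x _ => ((hasDerivAt_exp_neg_sq_div_two x).const_mul u⁻¹).neg)
    (fun x hx => by
      have : 0 < x := hu.trans hx
      simp only [neg_mul, mul_neg, neg_neg]
      positivity)
    (by simpa using (tendsto_exp_neg_sq_div_two_atTop.const_mul u⁻¹).neg)
    (fun x hx => by
      have : 1 ≤ u⁻¹ * x := by rw [← div_eq_inv_mul, one_le_div hu]; exact le_of_lt hx
      nlinarith [exp_pos (-(x ^ 2 / 2))])
  simpa using h

lemma le_integral_Ioi_exp_neg_sq_div_two {u : ℝ} (hu : 1 ≤ u) :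
    u / (1 + u ^ 2) * rexp (-(u ^ 2 / 2)) ≤ ∫ x in Ioi u, rexp (-(x ^ 2 / 2)) := by
  have hderiv : ∀ x : ℝ, HasDerivAt (fun y => -(y / (1 + y ^ 2) * rexp (-(y ^ 2 / 2))))
      (rexp (-(x ^ 2 / 2)) * ((x ^ 4 + 2 * x ^ 2 - 1) / (1 + x ^ 2) ^ 2)) x := by
    intro x
    have hx : 1 + x ^ 2 ≠ 0 := by positivity
    have hq : HasDerivAt (fun y : ℝ => y / (1 + y ^ 2)) ((1 - x ^ 2) / (1 + x ^ 2) ^ 2) x := by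
      refine ((hasDerivAt_id x).fun_div ((hasDerivAt_pow 2 x).const_add 1) hx).congr_deriv ?_
      simp only [id_eq]; push_cast; ring
    refine (hq.mul (hasDerivAt_exp_neg_sq_div_two x)).fun_neg.congr_deriv ?_
    field_simp
    ring
  have h := le_integral_Ioi_of_deriv_le (l := 0) (integrableOn_exp_neg_sq_div_two _)
    (fun x _ => hderiv x)
    (fun x hx => by
      have : 1 ≤ x := hu.trans (le_of_lt hx)
      have : 0 ≤ x ^ 4 + 2 * x ^ 2 - 1 := by nlinarith
      positivity)
    (by
      refine squeeze_zero_norm' ?_ tendsto_exp_neg_sq_div_two_atTop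
      filter_upwards [eventually_ge_atTop 0] with y hy
      have : y / (1 + y ^ 2) ≤ 1 := by rw [div_le_one (by positivity)]; nlinarith
      rw [norm_neg, norm_mul, Real.norm_of_nonneg (by positivity),
        Real.norm_of_nonneg (exp_pos _).le]
      exact mul_le_of_le_one_left (exp_pos _).le this)
    (fun x hx => by
      have : 0 ≤ x ^ 4 + 2 * x ^ 2 - 1 := by nlinarith [hu.trans (le_of_lt hx)]
      have : (x ^ 4 + 2 * x ^ 2 - 1) / (1 + x ^ 2) ^ 2 ≤ 1 := by
        rw [div_le_one (by positivity)]; nlinarith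
      nlinarith [exp_pos (-(x ^ 2 / 2))])
  simpa using h

lemma tendsto_mul_exp_mul_integral_Ioi_exp_neg_sq_div_two :
    Tendsto (fun u : ℝ => u * rexp (u ^ 2 / 2) * ∫ x in Ioi u, rexp (-(x ^ 2 / 2)))
      atTop (𝓝 1) := by
  have hlower : Tendsto (fun u : ℝ => u ^ 2 / (1 + u ^ 2)) atTop (𝓝 1) := by
    have := (tendsto_inv_atTop_zero.comp
      (tendsto_atTop_add_const_left _ 1 (tendsto_pow_atTop two_ne_zero))).const_sub (1 : ℝ)
    rw [sub_zero] at this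
    refine this.congr fun u => ?_
    have : 1 + u ^ 2 ≠ 0 := by positivity
    simp only [Function.comp_apply]
    field_simp
    ring
  refine tendsto_of_tendsto_of_tendsto_of_le_of_le' hlower tendsto_const_nhds ?_ ?_
  all_goals
    filter_upwards [eventually_ge_atTop 1] with u hu
    have hu0 : 0 < u := one_pos.trans_le hu
  · calc u ^ 2 / (1 + u ^ 2)
        = u * rexp (u ^ 2 / 2) * (u / (1 + u ^ 2) * rexp (-(u ^ 2 / 2))) := by
          rw [exp_neg]; field_simp
      _ ≤ _ := by gcongr; exact le_integral_Ioi_exp_neg_sq_div_two hu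
  · calc u * rexp (u ^ 2 / 2) * ∫ x in Ioi u, rexp (-(x ^ 2 / 2))
        ≤ u * rexp (u ^ 2 / 2) * (u⁻¹ * rexp (-(u ^ 2 / 2))) := by
          gcongr; exact integral_Ioi_exp_neg_sq_div_two_le hu0
      _ = 1 := by rw [exp_neg]; field_simp

lemma stdGaussSurvival_eq_integral (u : ℝ) :
    stdGaussSurvival u = (√(2 * π))⁻¹ * ∫ x in Ioi u, rexp (-(x ^ 2 / 2)) := by
  rw [stdGaussSurvival, gaussianReal_apply_eq_integral 0 one_ne_zero,
    ENNReal.toReal_ofReal (setIntegral_nonneg measurableSet_Ioi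
      fun x _ => gaussianPDFReal_nonneg 0 1 x), ← integral_const_mul]
  simp [gaussianPDFReal, neg_div]

lemma tendsto_log_stdGaussSurvival_add_sq_div_two_add_log :
    Tendsto (fun u => log (stdGaussSurvival u) + u ^ 2 / 2 + log u) atTop
      (𝓝 (-log √(2 * π))) := by
  have h := ((continuousAt_log one_ne_zero).tendsto.comp
    tendsto_mul_exp_mul_integral_Ioi_exp_neg_sq_div_two).sub_const (log √(2 * π))
  rw [log_one, zero_sub] at h
  refine h.congr' ?_
  filter_upwards [eventually_gt_atTop 0,
    tendsto_mul_exp_mul_integral_Ioi_exp_neg_sq_div_two.eventually_ne one_ne_zero] with u hu hI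
  have hI : (∫ x in Ioi u, rexp (-(x ^ 2 / 2))) ≠ 0 := right_ne_zero_of_mul hI
  rw [Function.comp_apply, stdGaussSurvival_eq_integral, log_mul (by positivity) hI,
    log_mul (by positivity) hI, log_mul hu.ne' (exp_pos _).ne', log_exp, log_inv]
  ring

section SqInversion

variable {L : ℝ → ℝ} {b K : ℝ}

lemma tendsto_sq_div_two_mul_of_tendsto_sq_div_two_sub
    (h : Tendsto (fun u => u ^ 2 / 2 - L u - b * log u) atTop (𝓝 K)) :
    Tendsto (fun u => u ^ 2 / (2 * L u)) atTop (𝓝 1) := by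
  have hsq : Tendsto (fun u : ℝ => u ^ 2) atTop atTop := tendsto_pow_atTop two_ne_zero
  have hlog : Tendsto (fun u => log u / u ^ 2) atTop (𝓝 0) := by
    simpa using (isLittleO_log_rpow_atTop (r := 2) two_pos).tendsto_div_nhds_zero
  have h' : Tendsto (fun u => 1 - 2 * b * (log u / u ^ 2)
      - 2 * ((u ^ 2 / 2 - L u - b * log u) / u ^ 2)) atTop (𝓝 1) := by
    simpa using ((hlog.const_mul (2 * b)).const_sub 1).sub ((h.div_atTop hsq).const_mul 2)
  have hinv : Tendsto (fun u => 2 * L u / u ^ 2) atTop (𝓝 1) := by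
    refine h'.congr' ?_
    filter_upwards [eventually_ne_atTop 0] with u hu
    field_simp
    ring
  simpa using hinv.inv₀ one_ne_zero

lemma tendsto_log_sub_half_log_two_mul_of_tendsto_sq_div_two_sub
    (h : Tendsto (fun u => u ^ 2 / 2 - L u - b * log u) atTop (𝓝 K)) :
    Tendsto (fun u => log u - (1 / 2 * log 2 + 1 / 2 * log (L u))) atTop (𝓝 0) := by
  have ha := tendsto_sq_div_two_mul_of_tendsto_sq_div_two_sub h
  have hlog := ((continuousAt_log one_ne_zero).tendsto.comp ha).const_mul (1 / 2)
  rw [log_one, mul_zero] at hlog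
  refine hlog.congr' ?_
  filter_upwards [eventually_gt_atTop 0, ha.eventually (lt_mem_nhds one_pos)] with u hu hpos
  have hL : 0 < L u := by
    have := (div_pos_iff_of_pos_left (by positivity)).1 hpos
    linarith
  rw [Function.comp_apply, log_div (by positivity) (by positivity), log_mul two_ne_zero hL.ne',
    log_pow]
  push_cast
  ring

lemma tendsto_sq_sub_two_mul_add_log_of_tendsto_sq_div_two_sub
    (h : Tendsto (fun u => u ^ 2 / 2 - L u - b * log u) atTop (𝓝 K)) :
    Tendsto (fun u => u ^ 2 - (2 * L u + b * log (L u))) atTop (𝓝 (2 * K + b * log 2)) := by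
  have hb := tendsto_log_sub_half_log_two_mul_of_tendsto_sq_div_two_sub h
  have := ((h.const_mul 2).add (hb.const_mul (2 * b))).add_const (b * log 2)
  rw [mul_zero, add_zero] at this
  refine this.congr fun u => ?_
  ring

end SqInversion

lemma tendsto_sq_div_two_sub_log_of_tendsto_mul_rpow_mul_stdGaussSurvival
    {c a ℓ : ℝ} {M : ℝ → ℝ} (hℓ : ℓ ≠ 0)
    (h : Tendsto (fun u => c * M u * u ^ a * stdGaussSurvival u) atTop (𝓝 ℓ)) :
    Tendsto (fun u => u ^ 2 / 2 - log (M u) - (a - 1) * log u) atTop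
      (𝓝 (log c - log ℓ - log √(2 * π))) := by
  have := ((continuousAt_log hℓ).tendsto.comp h).const_sub (log c) |>.add
    tendsto_log_stdGaussSurvival_add_sq_div_two_add_log
  rw [← sub_eq_add_neg] at this
  refine this.congr' ?_
  filter_upwards [eventually_gt_atTop 0, h.eventually_ne hℓ] with u hu hne
  simp only [mul_ne_zero_iff] at hne
  obtain ⟨⟨⟨hc, hM⟩, hpow⟩, hΨ⟩ := hne
  rw [Function.comp_apply, log_mul (by simp [hc, hM, hpow]) hΨ, log_mul (by simp [hc, hM]) hpow,
    log_mul hc hM, log_rpow hu]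
  ring

theorem statement12_general (α₁ α₂ τ c : ℝ)
    (hτ : 0 < τ) (hc : 0 < c)
    (T₁ T₂ : ℝ → ℝ)
    (hmain : Tendsto (fun u => c * T₁ u * T₂ u * u ^ (2 / α₁ + 2 / α₂)
      * stdGaussSurvival u) atTop (𝓝 (τ ^ 2))) :
    Tendsto (fun u : ℝ => u ^ 2 / (2 * Real.log (T₁ u * T₂ u))) atTop (𝓝 1)
    ∧ Tendsto (fun u : ℝ => Real.log u - ((1 / 2) * Real.log 2
        + (1 / 2) * Real.log (Real.log (T₁ u * T₂ u)))) atTop (𝓝 0)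
    ∧ Tendsto (fun u : ℝ => u ^ 2 - (2 * Real.log (T₁ u * T₂ u)
        + (2 / α₁ + 2 / α₂ - 1) * Real.log (Real.log (T₁ u * T₂ u))
        - 4 * Real.log τ
        + 2 * Real.log (c * 2 ^ (1 / α₁ + 1 / α₂) / (2 * Real.sqrt Real.pi))))
      atTop (𝓝 0) := by
  have hD := tendsto_sq_div_two_sub_log_of_tendsto_mul_rpow_mul_stdGaussSurvival
    (M := fun u => T₁ u * T₂ u) (pow_ne_zero 2 hτ.ne') (hmain.congr fun u => by ring)
  refine ⟨tendsto_sq_div_two_mul_of_tendsto_sq_div_two_sub hD,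
    tendsto_log_sub_half_log_two_mul_of_tendsto_sq_div_two_sub hD, ?_⟩
  have hexpansion := (tendsto_sq_sub_two_mul_add_log_of_tendsto_sq_div_two_sub hD).add_const
    (4 * log τ - 2 * log (c * 2 ^ (1 / α₁ + 1 / α₂) / (2 * √π)))
  convert hexpansion using 2 with u
  · ring
  · have h2s : (2 : ℝ) ^ (1 / α₁ + 1 / α₂) ≠ 0 := by positivity
    rw [log_div (mul_ne_zero hc.ne' h2s) (by positivity), log_mul hc.ne' h2s,
      log_mul two_ne_zero (by positivity), log_rpow two_pos, log_pow,
      log_sqrt (by positivity), log_sqrt pi_pos.le, log_mul two_ne_zero pi_pos.ne']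
    push_cast
    ring

/-- Asymptotic expansions of `u` in terms of `T₁(u)·T₂(u)` when
`c·T₁(u)·T₂(u)·u^{2/α₁+2/α₂}·Ψ(u) → τ²`. -/
theorem statement12 (α₁ α₂ τ c : ℝ)
    (hα₁ : α₁ ∈ Set.Ioc (0:ℝ) 2) (hα₂ : α₂ ∈ Set.Ioc (0:ℝ) 2)
    (hτ : 0 < τ) (hc : 0 < c)
    (T₁ T₂ : ℝ → ℝ) (hT₁pos : ∀ u, 0 < T₁ u) (hT₂pos : ∀ u, 0 < T₂ u)
    (hT₁ : Tendsto T₁ atTop atTop) (hT₂ : Tendsto T₂ atTop atTop)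
    (hmain : Tendsto (fun u => c * T₁ u * T₂ u * u ^ (2 / α₁ + 2 / α₂)
      * stdGaussSurvival u) atTop (𝓝 (τ ^ 2))) :
    Tendsto (fun u : ℝ => u ^ 2 / (2 * Real.log (T₁ u * T₂ u))) atTop (𝓝 1)
    ∧ Tendsto (fun u : ℝ => Real.log u - ((1 / 2) * Real.log 2
        + (1 / 2) * Real.log (Real.log (T₁ u * T₂ u)))) atTop (𝓝 0)
    ∧ Tendsto (fun u : ℝ => u ^ 2 - (2 * Real.log (T₁ u * T₂ u)
        + (2 / α₁ + 2 / α₂ - 1) * Real.log (Real.log (T₁ u * T₂ u))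
        - 4 * Real.log τ
        + 2 * Real.log (c * 2 ^ (1 / α₁ + 1 / α₂) / (2 * Real.sqrt Real.pi))))
      atTop (𝓝 0) :=
  statement12_general α₁ α₂ τ c hτ hc T₁ T₂ hmain
end
end

section
/- Let β ∈ ℝ and c ∈ ℝ be constants, and let v(u) be a function with v(u) = u + c/u + o(1/u) as u → ∞. Then ( v(u)^β · Ψ(v(u)) ) / ( u^β · Ψ(u) ) → e^{−c} as u → ∞. -/
/-!
The tail bounds `(1/u - 1/u³) φ(u) ≤ Ψ(u) ≤ φ(u)/u`, obtained by integrating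
`(-φ)' = x φ ≥ φ` and `((1/x - 1/x³) φ)' = (3/x⁴ - 1) φ ≥ -φ` over `(u, ∞)`, give the
Mills-ratio asymptotics `u Ψ(u) / φ(u) → 1`. Hence the quotient is `(v/u)^β · (u/v) · φ(v)/φ(u)`
up to a factor tending to `1`, and `φ(v)/φ(u) = exp((u² - v²)/2)`. Writing `v = u + c/u + ε`
with `u ε → 0`, one gets `v/u → 1` and `(u² - v²)/2 = -(c + u ε) - (v - u)²/2 → -c`.
-/

open MeasureTheory ProbabilityTheory Filter Set Topology Asymptotics

noncomputable section

local notation "φ" => gaussianPDFReal 0 1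

lemma gaussianPDFReal_zero_one : φ = fun x => (√(2 * Real.pi))⁻¹ * Real.exp (-x ^ 2 / 2) := by
  ext x
  simp [gaussianPDFReal]

lemma gaussianPDFReal_zero_one_div (x y : ℝ) : φ y / φ x = Real.exp ((x ^ 2 - y ^ 2) / 2) := by
  have : (√(2 * Real.pi))⁻¹ ≠ 0 := by positivity
  rw [gaussianPDFReal_zero_one, mul_div_mul_left _ _ this, ← Real.exp_sub]
  ring_nf

lemma hasDerivAt_gaussianPDFReal_zero_one (x : ℝ) : HasDerivAt φ (-x * φ x) x := by
  have hsq : HasDerivAt (fun y : ℝ => -y ^ 2 / 2) (-x) x :=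
    ((hasDerivAt_pow 2 x).neg.div_const 2).congr_deriv (by push_cast; ring)
  rw [gaussianPDFReal_zero_one]
  exact (hsq.exp.const_mul (√(2 * Real.pi))⁻¹).congr_deriv (by ring)

lemma tendsto_gaussianPDFReal_zero_one_atTop : Tendsto φ atTop (𝓝 0) := by
  have hsq : Tendsto (fun x : ℝ => -x ^ 2 / 2) atTop atBot :=
    (tendsto_neg_atBot_iff.mpr (tendsto_pow_atTop two_ne_zero)).atBot_div_const two_pos
  rw [gaussianPDFReal_zero_one]
  simpa using (Real.tendsto_exp_atBot.comp hsq).const_mul (√(2 * Real.pi))⁻¹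

lemma stdGaussSurvival_eq_integral_s14 (u : ℝ) : stdGaussSurvival u = ∫ x in Ioi u, φ x := by
  rw [stdGaussSurvival, gaussianReal_apply_eq_integral 0 one_ne_zero,
    ENNReal.toReal_ofReal (integral_nonneg fun x => gaussianPDFReal_nonneg _ _ _)]

lemma stdGaussSurvival_pos (u : ℝ) : 0 < stdGaussSurvival u := by
  refine ENNReal.toReal_pos (fun h => ?_) (measure_ne_top _ _)
  have := gaussianReal_absolutelyContinuous' 0 one_ne_zero h
  rw [Real.volume_Ioi] at this
  exact ENNReal.top_ne_zero this

lemma stdGaussSurvival_le_div {u : ℝ} (hu : 0 < u) : stdGaussSurvival u ≤ φ u / u := by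
  have hderiv : ∀ x ∈ Ici u, HasDerivAt (fun y => -φ y) (x * φ x) x := fun x _ =>
    (hasDerivAt_gaussianPDFReal_zero_one x).neg.congr_deriv (by ring)
  have hnonneg : ∀ x ∈ Ioi u, 0 ≤ x * φ x := fun x hx =>
    mul_nonneg (hu.trans hx).le (gaussianPDFReal_nonneg _ _ _)
  have htend : Tendsto (fun y => -φ y) atTop (𝓝 0) := by
    simpa using tendsto_gaussianPDFReal_zero_one_atTop.neg
  have hint : ∫ x in Ioi u, x * φ x = φ u := by
    simp [integral_Ioi_of_hasDerivAt_of_nonneg' hderiv hnonneg htend]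
  calc stdGaussSurvival u = ∫ x in Ioi u, φ x := stdGaussSurvival_eq_integral_s14 u
    _ ≤ ∫ x in Ioi u, u⁻¹ * (x * φ x) := by
        refine setIntegral_mono_on (integrable_gaussianPDFReal 0 1).integrableOn
          ((integrableOn_Ioi_deriv_of_nonneg' hderiv hnonneg htend).const_mul u⁻¹)
          measurableSet_Ioi fun x hx => ?_
        rw [← mul_assoc, inv_mul_eq_div]
        exact le_mul_of_one_le_left (gaussianPDFReal_nonneg _ _ _)
          ((one_le_div hu).mpr hx.le)
    _ = φ u / u := by rw [integral_const_mul, hint, inv_mul_eq_div]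

lemma div_sub_div_pow_three_mul_le_stdGaussSurvival {u : ℝ} (hu : 2 ≤ u) :
    (1 / u - 1 / u ^ 3) * φ u ≤ stdGaussSurvival u := by
  have hu0 : 0 < u := by linarith
  have hderiv : ∀ x ∈ Ici u, HasDerivAt (fun y => -((1 / y - 1 / y ^ 3) * φ y))
      ((1 - 3 / x ^ 4) * φ x) x := fun x hx => by
    have hx0 : x ≠ 0 := (hu0.trans_le hx).ne'
    have hrat : HasDerivAt (fun y : ℝ => 1 / y - 1 / y ^ 3) (-(x ^ 2)⁻¹ + 3 / x ^ 4) x := by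
      have := (hasDerivAt_inv hx0).sub ((hasDerivAt_pow 3 x).inv (pow_ne_zero 3 hx0))
      simp only [one_div]
      exact this.congr_deriv (by push_cast; field_simp; ring)
    exact (hrat.mul (hasDerivAt_gaussianPDFReal_zero_one x)).neg.congr_deriv
      (by field_simp; ring)
  have hnonneg : ∀ x ∈ Ioi u, 0 ≤ (1 - 3 / x ^ 4) * φ x := fun x hx => by
    have h16 : (2 : ℝ) ^ 4 ≤ x ^ 4 := pow_le_pow_left₀ (by norm_num) (hu.trans hx.le) 4
    have : 3 / x ^ 4 ≤ 1 := (div_le_one (by positivity)).mpr (by linarith)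
    exact mul_nonneg (by linarith) (gaussianPDFReal_nonneg _ _ _)
  have htend : Tendsto (fun y => -((1 / y - 1 / y ^ 3) * φ y)) atTop (𝓝 0) := by
    have hinv : Tendsto (fun y : ℝ => 1 / y) atTop (𝓝 0) := by
      simpa using tendsto_inv_atTop_zero
    have hrat : Tendsto (fun y : ℝ => 1 / y - 1 / y ^ 3) atTop (𝓝 0) := by
      simpa [div_pow] using hinv.sub (hinv.pow 3)
    simpa using (hrat.mul tendsto_gaussianPDFReal_zero_one_atTop).neg
  calc (1 / u - 1 / u ^ 3) * φ u = ∫ x in Ioi u, (1 - 3 / x ^ 4) * φ x := by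
        simp [integral_Ioi_of_hasDerivAt_of_nonneg' hderiv hnonneg htend]
    _ ≤ ∫ x in Ioi u, φ x := by
        refine setIntegral_mono_on (integrableOn_Ioi_deriv_of_nonneg' hderiv hnonneg htend)
          (integrable_gaussianPDFReal 0 1).integrableOn measurableSet_Ioi fun x hx => ?_
        have : 0 ≤ 3 / x ^ 4 := by positivity
        nlinarith [gaussianPDFReal_nonneg 0 1 x]
    _ = stdGaussSurvival u := (stdGaussSurvival_eq_integral_s14 u).symm

lemma tendsto_mul_stdGaussSurvival_div_gaussianPDFReal :
    Tendsto (fun u => u * stdGaussSurvival u / φ u) atTop (𝓝 1) := by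
  have hlower : Tendsto (fun u : ℝ => 1 - 1 / u ^ 2) atTop (𝓝 1) := by
    simpa using tendsto_const_nhds.sub ((tendsto_inv_atTop_zero (𝕜 := ℝ)).pow 2)
  refine tendsto_of_tendsto_of_tendsto_of_le_of_le' hlower tendsto_const_nhds ?_ ?_
  all_goals filter_upwards [eventually_ge_atTop (2 : ℝ)] with u hu
  all_goals have hu0 : 0 < u := by linarith
  all_goals have hφ := gaussianPDFReal_pos 0 1 u one_ne_zero
  · rw [le_div_iff₀ hφ]
    calc (1 - 1 / u ^ 2) * φ u = u * ((1 / u - 1 / u ^ 3) * φ u) := by field_simp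
      _ ≤ u * stdGaussSurvival u :=
        mul_le_mul_of_nonneg_left (div_sub_div_pow_three_mul_le_stdGaussSurvival hu) hu0.le
  · rw [div_le_one hφ, mul_comm, ← le_div_iff₀ hu0]
    exact stdGaussSurvival_le_div hu0

lemma tendsto_rpow_mul_stdGaussSurvival_div (β a : ℝ) {v : ℝ → ℝ}
    (hratio : Tendsto (fun u => v u / u) atTop (𝓝 1))
    (hsq : Tendsto (fun u => (u ^ 2 - v u ^ 2) / 2) atTop (𝓝 a)) :
    Tendsto (fun u => (v u ^ β * stdGaussSurvival (v u)) / (u ^ β * stdGaussSurvival u))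
      atTop (𝓝 (Real.exp a)) := by
  have hv : Tendsto v atTop atTop :=
    (hratio.pos_mul_atTop one_pos tendsto_id).congr' <| by
      filter_upwards [eventually_ne_atTop 0] with u hu using div_mul_cancel₀ (v u) hu
  have hmills := tendsto_mul_stdGaussSurvival_div_gaussianPDFReal
  have hmills_ratio := (hmills.comp hv).div hmills one_ne_zero
  rw [div_one] at hmills_ratio
  have hlim := (((hratio.rpow_const (p := β) (.inl one_ne_zero)).mul hmills_ratio).mul
    (hratio.inv₀ one_ne_zero)).mul ((Real.continuous_exp.tendsto a).comp hsq)
  simp only [Real.one_rpow, inv_one, one_mul] at hlim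
  refine hlim.congr' ?_
  filter_upwards [eventually_gt_atTop 0, hv.eventually (eventually_gt_atTop 0)] with u hu hvu
  have := stdGaussSurvival_pos u
  have := stdGaussSurvival_pos (v u)
  have := gaussianPDFReal_pos 0 1 u one_ne_zero
  have := gaussianPDFReal_pos 0 1 (v u) one_ne_zero
  have := Real.rpow_pos_of_pos hu β
  simp only [Pi.div_apply, Function.comp_apply, ← gaussianPDFReal_zero_one_div,
    Real.div_rpow hvu.le hu.le]
  field_simp

section Perturbation

variable {c : ℝ} {v : ℝ → ℝ} (hv : (fun u => v u - u - c / u) =o[atTop] (fun u : ℝ => 1 / u))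
include hv

lemma tendsto_mul_sub_sub_div_of_isLittleO :
    Tendsto (fun u => u * (v u - u - c / u)) atTop (𝓝 0) :=
  hv.tendsto_div_nhds_zero.congr fun u => by rw [div_div_eq_mul_div, div_one, mul_comm]

lemma tendsto_sub_of_isLittleO : Tendsto (fun u => v u - u) atTop (𝓝 0) := by
  have hinv : Tendsto (fun u : ℝ => 1 / u) atTop (𝓝 0) := by simpa using tendsto_inv_atTop_zero
  have := (hinv.const_mul c).add (hv.trans_tendsto hinv)
  rw [mul_zero, add_zero] at this
  exact this.congr fun u => by ring

lemma tendsto_div_of_isLittleO : Tendsto (fun u => v u / u) atTop (𝓝 1) := by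
  have := (tendsto_const_nhds (x := (1 : ℝ))).add
    ((tendsto_sub_of_isLittleO hv).mul tendsto_inv_atTop_zero)
  rw [mul_zero, add_zero] at this
  refine this.congr' ?_
  filter_upwards [eventually_ne_atTop 0] with u hu
  field_simp
  ring

lemma tendsto_sq_sub_sq_div_two_of_isLittleO :
    Tendsto (fun u => (u ^ 2 - v u ^ 2) / 2) atTop (𝓝 (-c)) := by
  have := ((tendsto_const_nhds (x := c)).add (tendsto_mul_sub_sub_div_of_isLittleO hv)).neg.sub
    (((tendsto_sub_of_isLittleO hv).pow 2).div_const 2)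
  simp only [add_zero, zero_pow two_ne_zero, zero_div, sub_zero] at this
  refine this.congr' ?_
  filter_upwards [eventually_ne_atTop 0] with u hu
  field_simp
  ring

end Perturbation

/-- If `v(u) = u + c/u + o(1/u)` as `u → ∞`, then
`(v(u)^β·Ψ(v(u)))/(u^β·Ψ(u)) → e^{-c}`. -/
theorem statement14 (β c : ℝ) (v : ℝ → ℝ)
    (hv : (fun u => v u - u - c / u) =o[atTop] (fun u : ℝ => 1 / u)) :
    Tendsto (fun u => (v u ^ β * stdGaussSurvival (v u)) /
        (u ^ β * stdGaussSurvival u)) atTop (𝓝 (Real.exp (-c))) :=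
  tendsto_rpow_mul_stdGaussSurvival_div β (-c) (tendsto_div_of_isLittleO hv)
    (tendsto_sq_sub_sq_div_two_of_isLittleO hv)
end
end
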